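/- arXiv:2509.26119 — 2 statements merged into one kernel-verified Lean document; each statement's English description precedes it below -/
import Mathlib

section
/- Let s ∈ {0,1,2}^n have m ones. Then the composite error ball of radius 2 centered at s has size n²/2 + 3n/2 + 1 + m(n-1) + (m² - m)/2. -/
/-- Row `j` of the decomposition of a `k`-resolution composite binary sequence
`s ∈ {0,…,k}^n`: position `p` of row `j` is `1` iff `s p ≥ k - j`
(so letter `i` decomposes to the column `0^(k-i) 1^i`). -/
def decompRow (k n : ℕ) (s : Fin n → Fin (k + 1)) (j : Fin k) (p : Fin n) : Bool :=
  decide (k - (j : ℕ) ≤ (s p : ℕ))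

/-- A column `c : Fin k → Bool` is valid (reconstructible) iff it is nondecreasing,
i.e. of the form `0^(k-i) 1^i`. -/
def validCol (k : ℕ) (c : Fin k → Bool) : Prop :=
  ∀ j j' : Fin k, j ≤ j' → c j = true → c j' = true

/-- The letter reconstructed from a column: the number of ones in the column. -/
def reconAt (k : ℕ) (c : Fin k → Bool) : ℕ :=
  (Finset.univ.filter fun j => c j = true).card

/-- The composite error ball of radius `(e 0, …, e (k-1))` centered at `s`:
all valid reconstructions `y` of rows `r` where row `j` differs from the `j`-th
decomposed row of `s` in at most `e j` positions. -/
def ballTuple (k n : ℕ) (e : Fin k → ℕ) (s : Fin n → Fin (k + 1)) :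
    Set (Fin n → Fin (k + 1)) :=
  { y | ∃ r : Fin k → Fin n → Bool,
      (∀ j, hammingDist (r j) (decompRow k n s j) ≤ e j) ∧
      (∀ p, validCol k (fun j => r j p)) ∧
      (∀ p, (y p : ℕ) = reconAt k (fun j => r j p)) }

/-- The composite error ball of total radius `e` centered at `s`: all valid
reconstructions `y` of rows `r` differing from the decomposed rows of `s`
in at most `e` positions in total. -/
def ballTotal (k n : ℕ) (e : ℕ) (s : Fin n → Fin (k + 1)) :
    Set (Fin n → Fin (k + 1)) :=
  { y | ∃ r : Fin k → Fin n → Bool,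
      (∑ j, hammingDist (r j) (decompRow k n s j)) ≤ e ∧
      (∀ p, validCol k (fun j => r j p)) ∧
      (∀ p, (y p : ℕ) = reconAt k (fun j => r j p)) }

/-! A valid column of height `k` is determined by its number of ones, and the columns of the
letters `a` and `b` differ in exactly `|a - b|` rows. So every word of the composite ball has a
unique decomposition, and the composite ball of total radius `e` is the ℓ¹-ball of radius `e` in
`{0,…,k}^n`. For `k = 2` the size of that ball follows by induction on `n`, splitting off the
first letter: a letter `0` or `2` has one neighbour at distance `1` and one at distance `2`, a
letter `1` has two neighbours at distance `1` and none at distance `2`. -/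

open Finset

-- `decompRow k n s · p = letterCol k (s p)` definitionally.
def letterCol (k a : ℕ) : Fin k → Bool := fun j => decide (k - (j : ℕ) ≤ a)

section Columns

variable {k : ℕ}

lemma card_filter_sub_val_le {a : ℕ} (ha : a ≤ k) : #{j : Fin k | k - (j : ℕ) ≤ a} = a := by
  have hsplit := card_filter_add_card_filter_not (s := (univ : Finset (Fin k)))
    (fun j : Fin k => (j : ℕ) < k - a)
  have hcompl : #{j : Fin k | ¬ (j : ℕ) < k - a} = #{j : Fin k | k - (j : ℕ) ≤ a} := by
    congr 1; ext j; simp only [mem_filter, mem_univ, true_and]; omega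
  rw [hcompl, Fin.card_filter_val_lt, card_univ, Fintype.card_fin] at hsplit
  omega

lemma card_letterCol_ne {a b : ℕ} (ha : a ≤ k) (hb : b ≤ k) :
    #{j | letterCol k a j ≠ letterCol k b j} = Nat.dist a b := by
  wlog hab : a ≤ b generalizing a b
  · rw [Nat.dist_comm, ← this hb ha (by omega)]
    simp only [ne_comm]
  have hsub : univ.filter (fun j : Fin k => k - (j : ℕ) ≤ a)
      ⊆ univ.filter (fun j : Fin k => k - (j : ℕ) ≤ b) := by
    intro j; simp only [mem_filter, mem_univ, true_and]; omega
  have hdiff : univ.filter (fun j => letterCol k a j ≠ letterCol k b j)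
      = univ.filter (fun j : Fin k => k - (j : ℕ) ≤ b)
        \ univ.filter (fun j => k - (j : ℕ) ≤ a) := by
    ext j
    simp only [letterCol, mem_filter, mem_sdiff, mem_univ, true_and, ne_eq, decide_eq_decide]
    omega
  rw [hdiff, card_sdiff_of_subset hsub, card_filter_sub_val_le ha, card_filter_sub_val_le hb,
    Nat.dist_eq_sub_of_le hab]

lemma validCol_letterCol (a : ℕ) : validCol k (letterCol k a) := by
  intro j j' hjj' h
  simp only [letterCol, decide_eq_true_eq] at h ⊢
  have : (j : ℕ) ≤ j' := hjj'
  omega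

lemma reconAt_letterCol {a : ℕ} (ha : a ≤ k) : reconAt k (letterCol k a) = a := by
  simpa [reconAt, letterCol] using card_filter_sub_val_le ha

lemma eq_letterCol_reconAt {c : Fin k → Bool} (hc : validCol k c) :
    c = letterCol k (reconAt k c) := by
  funext j
  unfold letterCol reconAt
  cases hj : c j
  · have hsub : univ.filter (fun j' => c j' = true) ⊆ Ioi j := by
      intro j' hj'
      rw [mem_filter] at hj'
      rw [mem_Ioi]
      by_contra! hle
      simp [hc j' j hle hj'.2] at hj
    have := card_le_card hsub
    rw [Fin.card_Ioi] at this
    simp only [Bool.false_eq, decide_eq_false_iff_not, not_le]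
    omega
  · have hsub : Ici j ⊆ univ.filter (fun j' => c j' = true) := by
      intro j' hj'
      rw [mem_filter]
      exact ⟨mem_univ _, hc j j' (mem_Ici.mp hj') hj⟩
    have := card_le_card hsub
    rw [Fin.card_Ici] at this
    simpa using this

end Columns

section L1Ball

variable {k n : ℕ}

def l1Dist (x y : Fin n → Fin (k + 1)) : ℕ := ∑ p, Nat.dist (x p) (y p)

def l1Ball (s : Fin n → Fin (k + 1)) (t : ℕ) : Finset (Fin n → Fin (k + 1)) :=
  {y | l1Dist s y ≤ t}

lemma sum_hammingDist_decompRow (s y : Fin n → Fin (k + 1)) :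
    ∑ j, hammingDist (decompRow k n y j) (decompRow k n s j) = l1Dist s y := by
  simp only [hammingDist, card_filter]
  rw [sum_comm]
  refine sum_congr rfl fun p _ => ?_
  rw [← card_filter, Nat.dist_comm]
  exact card_letterCol_ne (Nat.le_of_lt_succ (y p).2) (Nat.le_of_lt_succ (s p).2)

lemma ballTotal_eq_l1Ball (e : ℕ) (s : Fin n → Fin (k + 1)) :
    ballTotal k n e s = l1Ball s e := by
  ext y
  simp only [ballTotal, l1Ball, coe_filter, mem_univ, true_and, Set.mem_ofPred_eq]
  constructor
  · rintro ⟨r, hr, hvalid, hy⟩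
    have hr_eq : r = decompRow k n y := by
      funext j p
      rw [congrFun (eq_letterCol_reconAt (hvalid p)) j, ← hy p]
      rfl
    rwa [hr_eq, sum_hammingDist_decompRow] at hr
  · intro hy
    refine ⟨decompRow k n y, by rwa [sum_hammingDist_decompRow], fun p => validCol_letterCol _,
      fun p => (reconAt_letterCol (Nat.le_of_lt_succ (y p).2)).symm⟩

lemma l1Ball_zero (s : Fin n → Fin (k + 1)) : l1Ball s 0 = {s} := by
  ext y
  simp only [l1Ball, l1Dist, mem_filter, mem_univ, true_and, nonpos_iff_eq_zero,
    sum_eq_zero_iff, true_implies, mem_singleton, funext_iff]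
  refine forall_congr' fun p => ?_
  rw [← Fin.val_inj]
  exact ⟨fun h => (Nat.eq_of_dist_eq_zero h).symm, fun h => Nat.dist_eq_zero h.symm⟩

lemma l1Dist_cons (a b : Fin (k + 1)) (x y : Fin n → Fin (k + 1)) :
    l1Dist (Fin.cons a x : Fin (n + 1) → Fin (k + 1)) (Fin.cons b y)
      = Nat.dist a b + l1Dist x y := by
  simp only [l1Dist, Fin.sum_univ_succ, Fin.cons_zero, Fin.cons_succ]

lemma card_l1Ball_cons (a : Fin (k + 1)) (s : Fin n → Fin (k + 1)) (t : ℕ) :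
    #(l1Ball (Fin.cons a s) t)
      = ∑ b : Fin (k + 1), if Nat.dist a b ≤ t then #(l1Ball s (t - Nat.dist a b)) else 0 := by
  simp only [l1Ball, card_filter]
  rw [← (Fin.consEquiv fun _ => Fin (k + 1)).sum_comp, Fintype.sum_prod_type]
  refine sum_congr rfl fun b _ => ?_
  simp only [Fin.consEquiv, Equiv.coe_fn_mk, l1Dist_cons]
  split_ifs with hb
  · exact sum_congr rfl fun z _ => if_congr (by omega) rfl rfl
  · exact sum_eq_zero fun z _ => if_neg (by omega)

end L1Ball

def numOnes {n : ℕ} (s : Fin n → Fin 3) : ℕ := #{p | (s p : ℕ) = 1}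

lemma numOnes_cons {n : ℕ} (a : Fin 3) (s : Fin n → Fin 3) :
    numOnes (Fin.cons a s : Fin (n + 1) → Fin 3)
      = (if (a : ℕ) = 1 then 1 else 0) + numOnes s := by
  simp only [numOnes, Fin.card_filter_univ_succ', Fin.cons_zero, Fin.cons_succ]

lemma card_l1Ball_one {n : ℕ} (s : Fin n → Fin 3) : #(l1Ball s 1) = 1 + n + numOnes s := by
  induction s using Fin.consInduction with
  | elim0 => rfl
  | cons a s ih =>
    rw [card_l1Ball_cons, Fin.sum_univ_three, numOnes_cons]
    fin_cases a <;> simp [Nat.dist, l1Ball_zero, ih] <;> omega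

lemma card_l1Ball_two {n : ℕ} (s : Fin n → Fin 3) :
    2 * #(l1Ball s 2) + n + 3 * numOnes s = 2 + 4 * n + (n + numOnes s) ^ 2 := by
  induction s using Fin.consInduction with
  | elim0 => rfl
  | cons a s ih =>
    rw [card_l1Ball_cons, Fin.sum_univ_three, numOnes_cons]
    fin_cases a <;> simp [Nat.dist, l1Ball_zero, card_l1Ball_one] <;> nlinarith

/-- For `s ∈ {0,1,2}^n` with `m` ones, the composite error ball of radius `2` centered
at `s` has size `n²/2 + 3n/2 + 1 + m(n-1) + (m²-m)/2`. -/
theorem stmt_10 (n : ℕ) (s : Fin n → Fin 3) (m : ℕ)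
    (hm : m = (Finset.univ.filter fun p => (s p : ℕ) = 1).card) :
    ((ballTotal 2 n 2 s).ncard : ℚ)
      = (n : ℚ) ^ 2 / 2 + 3 * (n : ℚ) / 2 + 1 + (m : ℚ) * ((n : ℚ) - 1)
        + ((m : ℚ) ^ 2 - (m : ℚ)) / 2 := by
  have hcard : (2 * #(l1Ball s 2) + n + 3 * m : ℚ) = 2 + 4 * n + (n + m) ^ 2 := by
    rw [hm]
    exact_mod_cast card_l1Ball_two s
  rw [ballTotal_eq_l1Ball, Set.ncard_coe_finset]
  linarith
end

section
/- The average over all s ∈ {0,1,2}^n of the size of the composite error ball of radius (1,1) equals 4n²/9 + 14n/9 + 1. -/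
/-!
A word of the radius-`(1,1)` ball around `s` comes from two rows, each equal to the
corresponding decomposed row of `s` flipped at at most one position; we record these
positions as a pair `(a, b)` of `Option`s. Valid columns are determined by their number of
ones, so distinct admissible pairs give distinct words and the ball has as many elements as
there are admissible pairs. Summing over `s` and swapping the sums, the centres admitting a
fixed pair form a product set in which each coordinate hit by an error excludes exactly one
of the three letters; hence the pair contributes `3^n (2/3)^k`, `k` the number of coordinates
hit, and summing over pairs gives `3^n (1 + 2n + 4n(n-1)/9)`.
-/

open Finset

theorem Finset.card_le_one_iff_eq_toFinset {α : Type*} {s : Finset α} :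
    #s ≤ 1 ↔ ∃ o : Option α, s = o.toFinset := by
  refine ⟨fun h => ?_, ?_⟩
  · obtain rfl | ⟨x, hx⟩ := s.eq_empty_or_nonempty
    · exact ⟨none, rfl⟩
    · exact ⟨some x, eq_singleton_iff_unique_mem.2 ⟨hx, fun y hy => card_le_one.1 h y hy x hx⟩⟩
  · rintro ⟨_ | x, rfl⟩ <;> simp

theorem Fintype.prod_ite_mem_eq_pow_mul_div_pow {ι K : Type*} [Fintype ι] [DecidableEq ι]
    [Field K] (T : Finset ι) (x : K) {y : K} (hy : y ≠ 0) :
    ∏ p, (if p ∈ T then x else y) = y ^ Fintype.card ι * (x / y) ^ #T := by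
  calc ∏ p, (if p ∈ T then x else y) = ∏ p, y * (if p ∈ T then x / y else 1) := by
        refine Finset.prod_congr rfl fun p _ => ?_
        split_ifs <;> field_simp
    _ = y ^ Fintype.card ι * (x / y) ^ #T := by
        rw [prod_mul_distrib, prod_const, card_univ, prod_ite_mem, prod_const]

section Flips

variable {ι : Type*} [DecidableEq ι]

def flipAt (o : Option ι) (g : ι → Bool) (p : ι) : Bool :=
  xor (decide (o = some p)) (g p)

theorem flipAt_ne_iff {o : Option ι} {g : ι → Bool} {p : ι} :
    flipAt o g p ≠ g p ↔ o = some p := by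
  unfold flipAt
  cases g p <;> simp

theorem flipAt_left_injective (g : ι → Bool) : Function.Injective (flipAt · g) := by
  intro o o' h
  refine Option.ext fun p => ?_
  simp only [← flipAt_ne_iff (g := g)]
  rw [show flipAt o g = flipAt o' g from h]

theorem hammingDist_le_one_iff_eq_flipAt [Fintype ι] {f g : ι → Bool} :
    hammingDist f g ≤ 1 ↔ ∃ o : Option ι, f = flipAt o g := by
  rw [hammingDist, card_le_one_iff_eq_toFinset]
  refine exists_congr fun o => ?_
  rw [funext_iff, Finset.ext_iff]
  refine forall_congr' fun p => ?_
  simp only [mem_filter, mem_univ, true_and, Option.mem_toFinset, Option.mem_def, flipAt]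
  cases f p <;> cases g p <;> by_cases o = some p <;> simp_all

def errorSupport (ab : Option ι × Option ι) : Finset ι :=
  ab.1.toFinset ∪ ab.2.toFinset

theorem card_errorSupport_some_some (p q : ι) :
    #(errorSupport (some p, some q)) = if p = q then 1 else 2 := by
  split_ifs with h
  · simp [errorSupport, h]
  · simp [errorSupport, card_pair h]

theorem sum_pow_card_errorSupport [Fintype ι] {R : Type*} [CommRing R] (x : R) :
    ∑ ab : Option ι × Option ι, x ^ #(errorSupport ab) =
      1 + 3 * Fintype.card ι * x + Fintype.card ι * (Fintype.card ι - 1) * x ^ 2 := by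
  simp only [Fintype.sum_prod_type, Fintype.sum_option, card_errorSupport_some_some]
  have hsplit : ∀ p q : ι,
      (if p = q then x else x ^ 2) = x ^ 2 + if p = q then x - x ^ 2 else 0 := by
    intro p q
    split_ifs <;> ring
  simp only [errorSupport, Option.toFinset_none, Option.toFinset_some, union_idempotent,
    empty_union, union_empty, card_empty, card_singleton, pow_zero, pow_one, pow_ite, hsplit,
    sum_add_distrib, sum_const, sum_ite_eq, mem_univ, if_true, card_univ, nsmul_eq_mul]
  ring

end Flips

instance (k : ℕ) : DecidablePred (validCol k) := fun c => by
  unfold validCol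
  infer_instance

theorem reconAt_le (k : ℕ) (c : Fin k → Bool) : reconAt k c ≤ k :=
  (card_filter_le _ _).trans_eq (card_fin k)

theorem eq_of_validCol_two_of_reconAt_eq : ∀ c c' : Fin 2 → Bool,
    validCol 2 c → validCol 2 c' → reconAt 2 c = reconAt 2 c' → c = c' := by
  decide

-- `![decide (2 ≤ x), decide (1 ≤ x)]` is the column of the letter `x` under `decompRow 2`.
def admissibleLetters (e f : Bool) : Finset (Fin 3) :=
  {x | validCol 2 ![xor e (decide (2 ≤ (x : ℕ))), xor f (decide (1 ≤ (x : ℕ)))]}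

theorem card_admissibleLetters : ∀ e f : Bool,
    #(admissibleLetters e f) = if e || f then 2 else 3 := by
  decide

section RadiusOne

variable {n : ℕ}

def errorRows (s : Fin n → Fin 3) (ab : Option (Fin n) × Option (Fin n)) :
    Fin 2 → Fin n → Bool :=
  ![flipAt ab.1 (decompRow 2 n s 0), flipAt ab.2 (decompRow 2 n s 1)]

def admissiblePatterns (s : Fin n → Fin 3) : Finset (Option (Fin n) × Option (Fin n)) :=
  {ab | ∀ p, validCol 2 fun j => errorRows s ab j p}

def reconstruct (s : Fin n → Fin 3) (ab : Option (Fin n) × Option (Fin n)) (p : Fin n) :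
    Fin 3 :=
  ⟨reconAt 2 (fun j => errorRows s ab j p), Nat.lt_succ_of_le (reconAt_le 2 _)⟩

theorem errorRows_injective (s : Fin n → Fin 3) : Function.Injective (errorRows s) :=
  fun _ _ h =>
    Prod.ext (flipAt_left_injective _ (congrFun h 0)) (flipAt_left_injective _ (congrFun h 1))

theorem mem_ballTuple_iff {s y : Fin n → Fin 3} :
    y ∈ ballTuple 2 n (fun _ => 1) s ↔ ∃ ab ∈ admissiblePatterns s, reconstruct s ab = y := by
  constructor
  · rintro ⟨r, hdist, hvalid, hy⟩
    obtain ⟨a, ha⟩ := hammingDist_le_one_iff_eq_flipAt.1 (hdist 0)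
    obtain ⟨b, hb⟩ := hammingDist_le_one_iff_eq_flipAt.1 (hdist 1)
    obtain rfl : r = errorRows s (a, b) := funext fun j => by fin_cases j <;> assumption
    exact ⟨(a, b), by simpa [admissiblePatterns] using hvalid,
      funext fun p => Fin.ext (hy p).symm⟩
  · rintro ⟨ab, hab, rfl⟩
    refine ⟨errorRows s ab, fun j => ?_, (mem_filter.1 hab).2, fun p => rfl⟩
    fin_cases j <;> exact hammingDist_le_one_iff_eq_flipAt.2 ⟨_, rfl⟩

theorem reconstruct_injOn (s : Fin n → Fin 3) :
    Set.InjOn (reconstruct s) (admissiblePatterns s) := by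
  intro ab hab ab' hab' h
  have hcol : ∀ p, (fun j => errorRows s ab j p) = fun j => errorRows s ab' j p := fun p =>
    eq_of_validCol_two_of_reconAt_eq _ _ ((mem_filter.1 hab).2 p) ((mem_filter.1 hab').2 p)
      (congrArg Fin.val (congrFun h p))
  exact errorRows_injective s (funext fun j => funext fun p => congrFun (hcol p) j)

theorem ncard_ballTuple (s : Fin n → Fin 3) :
    (ballTuple 2 n (fun _ => 1) s).ncard = #(admissiblePatterns s) := by
  have hball : ballTuple 2 n (fun _ => 1) s =
      ((admissiblePatterns s).image (reconstruct s) : Set (Fin n → Fin 3)) := by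
    ext y
    simp [mem_ballTuple_iff]
  rw [hball, Set.ncard_coe_finset, card_image_of_injOn (reconstruct_injOn s)]

theorem mem_admissiblePatterns_iff {s : Fin n → Fin 3} {ab : Option (Fin n) × Option (Fin n)} :
    ab ∈ admissiblePatterns s ↔
      s ∈ Fintype.piFinset fun p => admissibleLetters (ab.1 = some p) (ab.2 = some p) := by
  simp only [admissiblePatterns, admissibleLetters, mem_filter, mem_univ, true_and,
    Fintype.mem_piFinset]
  refine forall_congr' fun p => Iff.of_eq (congrArg _ (funext fun j => ?_))
  fin_cases j <;> rfl

theorem sum_card_admissiblePatterns :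
    ∑ s : Fin n → Fin 3, #(admissiblePatterns s) =
      ∑ ab : Option (Fin n) × Option (Fin n), ∏ p, if p ∈ errorSupport ab then 2 else 3 := by
  let admits (s : Fin n → Fin 3) (ab : Option (Fin n) × Option (Fin n)) : Prop :=
    ab ∈ admissiblePatterns s
  calc ∑ s : Fin n → Fin 3, #(admissiblePatterns s)
      = ∑ s, #(univ.bipartiteAbove admits s) := by simp [admits, bipartiteAbove]
    _ = ∑ ab, #(univ.bipartiteBelow admits ab) :=
        sum_card_bipartiteAbove_eq_sum_card_bipartiteBelow _
    _ = ∑ ab : Option (Fin n) × Option (Fin n),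
          #(Fintype.piFinset fun p => admissibleLetters (ab.1 = some p) (ab.2 = some p)) := by
        simp only [admits, bipartiteBelow, mem_admissiblePatterns_iff, filter_mem_eq_inter,
          univ_inter]
    _ = ∑ ab, ∏ p, if p ∈ errorSupport ab then 2 else 3 := by
        simp [card_admissibleLetters, errorSupport]

end RadiusOne

/-- The average over all `s ∈ {0,1,2}^n` of the size of the composite error ball of
radius `(1,1)` equals `4n²/9 + 14n/9 + 1`. -/
theorem stmt_13 (n : ℕ) :
    (∑ s : Fin n → Fin 3, ((ballTuple 2 n (fun _ => 1) s).ncard : ℚ)) / 3 ^ n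
      = 4 * (n : ℚ) ^ 2 / 9 + 14 * (n : ℚ) / 9 + 1 := by
  have hsum : ∑ s : Fin n → Fin 3, ((ballTuple 2 n (fun _ => 1) s).ncard : ℚ) =
      3 ^ n * (1 + 3 * n * (2 / 3) + n * (n - 1) * (2 / 3) ^ 2) := by
    calc ∑ s : Fin n → Fin 3, ((ballTuple 2 n (fun _ => 1) s).ncard : ℚ)
        = ∑ ab : Option (Fin n) × Option (Fin n),
            ∏ p, if p ∈ errorSupport ab then (2 : ℚ) else 3 := by
          simp only [ncard_ballTuple]
          exact_mod_cast sum_card_admissiblePatterns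
      _ = ∑ ab : Option (Fin n) × Option (Fin n), 3 ^ n * (2 / 3 : ℚ) ^ #(errorSupport ab) := by
          simp only [Fintype.prod_ite_mem_eq_pow_mul_div_pow _ _ (three_ne_zero (α := ℚ)),
            Fintype.card_fin]
      _ = 3 ^ n * (1 + 3 * n * (2 / 3) + n * (n - 1) * (2 / 3) ^ 2) := by
          rw [← mul_sum, sum_pow_card_errorSupport, Fintype.card_fin]
  rw [hsum]
  field_simp
  ring
end
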